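/- Let R be a commutative Armendariz ring, σ a ring endomorphism of R, and M an R-module satisfying the condition (C_σ^2): for all m ∈ M and a ∈ R, (σ(a)·a)·m = 0 implies σ(a)·m = 0. Then M is an Armendariz module if and only if the Nagata extension R⊕_σM is an Armendariz ring. -/

import Mathlib

/-!
A polynomial over `R ⊕_σ M` is a pair `(A, m)` with `A ∈ R[x]`, `m ∈ M[x]`, and
`(A, m) (B, n) = (A B, σ(A) n + B m)`. So `f g = 0` means `A B = 0` and `σ(A) n + B m = 0`.
Multiplying the second equation by `A` kills `B m`, leaving `(A σ(A)) n = 0`. Applying the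
Armendariz property of `M` twice gives `a_i σ(a_i) n_v = 0`, whence `σ(a_i) n_v = 0` by
`(C_σ^2)`; thus `σ(A) n = 0`, then `B m = 0`, and every coefficient product vanishes.
Conversely, `f m = 0` in `M[x]` says exactly that `(0, m) (f, 0) = 0`.
-/

/-- The Nagata extension `R ⊕_σ M` of a commutative ring `R` by an `R`-module `M` along a
ring endomorphism `σ` of `R`: the underlying additive group is `R × M`, with multiplication
`(a, m) * (b, n) = (a * b, σ a • n + b • m)`. -/
@[nolint unusedArguments]
def Nagata (R : Type*) [CommRing R] (σ : R →+* R) (M : Type*)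
    [AddCommGroup M] [Module R M] : Type _ := R × M

namespace Nagata

variable {R : Type*} [CommRing R] {σ : R →+* R} {M : Type*} [AddCommGroup M] [Module R M]

instance : AddCommGroup (Nagata R σ M) := inferInstanceAs (AddCommGroup (R × M))

/-- The element `(a, m)` of the Nagata extension. -/
def mk (a : R) (m : M) : Nagata R σ M := (a, m)

instance : Ring (Nagata R σ M) where
  __ := (inferInstance : AddCommGroup (Nagata R σ M))
  mul x y := (x.1 * y.1, σ x.1 • y.2 + y.1 • x.2)
  one := ((1 : R), (0 : M))
  left_distrib x y z := by
    refine Prod.ext ?_ ?_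
    · show x.1 * (y.1 + z.1) = x.1 * y.1 + x.1 * z.1; ring
    · show σ x.1 • (y.2 + z.2) + (y.1 + z.1) • x.2
          = (σ x.1 • y.2 + y.1 • x.2) + (σ x.1 • z.2 + z.1 • x.2)
      rw [smul_add, add_smul]; abel
  right_distrib x y z := by
    refine Prod.ext ?_ ?_
    · show (x.1 + y.1) * z.1 = x.1 * z.1 + y.1 * z.1; ring
    · show σ (x.1 + y.1) • z.2 + z.1 • (x.2 + y.2)
          = (σ x.1 • z.2 + z.1 • x.2) + (σ y.1 • z.2 + z.1 • y.2)
      rw [map_add, add_smul, smul_add]; abel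
  zero_mul x := by
    refine Prod.ext ?_ ?_
    · show (0 : R) * x.1 = 0; ring
    · show σ (0 : R) • x.2 + x.1 • (0 : M) = 0; simp
  mul_zero x := by
    refine Prod.ext ?_ ?_
    · show x.1 * (0 : R) = 0; ring
    · show σ x.1 • (0 : M) + (0 : R) • x.2 = 0; simp
  mul_assoc x y z := by
    refine Prod.ext ?_ ?_
    · show x.1 * y.1 * z.1 = x.1 * (y.1 * z.1); ring
    · show σ (x.1 * y.1) • z.2 + z.1 • (σ x.1 • y.2 + y.1 • x.2)
          = σ x.1 • (σ y.1 • z.2 + z.1 • y.2) + (y.1 * z.1) • x.2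
      rw [map_mul, mul_smul, smul_add, smul_add, mul_smul, smul_comm z.1 (σ x.1),
        smul_comm z.1 y.1]
      abel
  one_mul x := by
    refine Prod.ext ?_ ?_
    · show 1 * x.1 = x.1; ring
    · show σ 1 • x.2 + x.1 • (0 : M) = x.2; simp
  mul_one x := by
    refine Prod.ext ?_ ?_
    · show x.1 * 1 = x.1; ring
    · show σ x.1 • (0 : M) + (1 : R) • x.2 = x.2; simp

end Nagata

/-- A ring `S` is Armendariz if whenever polynomials over it satisfy `f * g = 0`, all
products of their coefficients vanish. -/
def IsArmendarizRing (S : Type*) [Ring S] : Prop :=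
  ∀ f g : Polynomial S, f * g = 0 → ∀ i j, f.coeff i * g.coeff j = 0

/-- An `R`-module `M` is Armendariz if whenever `m(x) f(x) = 0` in the `R[x]`-module
`M[x]`, all the products `a_j • m_i` of coefficients vanish. -/
def IsArmendarizModule (R M : Type*) [CommRing R] [AddCommGroup M] [Module R M] : Prop :=
  ∀ (m : PolynomialModule R M) (f : Polynomial R), f • m = 0 → ∀ i j, f.coeff j • m.coeff i = 0

open Polynomial

noncomputable section

namespace Nagata

variable {R : Type*} [CommRing R] {σ : R →+* R} {M : Type*} [AddCommGroup M] [Module R M]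

@[simp] lemma fst_mul (x y : Nagata R σ M) : (x * y).1 = x.1 * y.1 := rfl

@[simp] lemma snd_mul (x y : Nagata R σ M) : (x * y).2 = σ x.1 • y.2 + y.1 • x.2 := rfl

lemma snd_sum {ι : Type*} (s : Finset ι) (x : ι → Nagata R σ M) :
    (∑ i ∈ s, x i).2 = ∑ i ∈ s, (x i).2 :=
  Prod.snd_sum

@[simp] lemma fst_mk (a : R) (m : M) : (mk (σ := σ) a m).1 = a := rfl

@[simp] lemma snd_mk (a : R) (m : M) : (mk (σ := σ) a m).2 = m := rfl

@[simp] lemma fst_zero : (0 : Nagata R σ M).1 = 0 := rfl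

@[simp] lemma snd_zero : (0 : Nagata R σ M).2 = 0 := rfl

variable (σ M) in
def fstHom : Nagata R σ M →+* R where
  toFun := Prod.fst
  map_one' := rfl
  map_mul' _ _ := rfl
  map_zero' := rfl
  map_add' _ _ := rfl

def fstPoly (f : (Nagata R σ M)[X]) : R[X] := f.map (fstHom σ M)

def sndPoly (f : (Nagata R σ M)[X]) : PolynomialModule R M :=
  .ofCoeff R (f.toFinsupp.coeff.mapRange Prod.snd rfl)

def mkPoly (p : R[X]) (m : PolynomialModule R M) : (Nagata R σ M)[X] :=
  ⟨.ofCoeff (Finsupp.zipWith Prod.mk rfl p.toFinsupp.coeff m.coeff)⟩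

@[simp] lemma coeff_fstPoly (f : (Nagata R σ M)[X]) (n : ℕ) :
    (fstPoly f).coeff n = (f.coeff n).1 :=
  coeff_map _ _

@[simp] lemma coeff_sndPoly (f : (Nagata R σ M)[X]) (n : ℕ) :
    (sndPoly f).coeff n = (f.coeff n).2 :=
  Finsupp.mapRange_apply (hf := rfl)

@[simp] lemma coeff_mkPoly (p : R[X]) (m : PolynomialModule R M) (n : ℕ) :
    (mkPoly (σ := σ) p m).coeff n = mk (p.coeff n) (m.coeff n) :=
  Finsupp.zipWith_apply (hf := rfl)

@[simp] lemma fstPoly_mkPoly (p : R[X]) (m : PolynomialModule R M) :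
    fstPoly (mkPoly (σ := σ) p m) = p := by
  ext n; simp

@[simp] lemma sndPoly_mkPoly (p : R[X]) (m : PolynomialModule R M) :
    sndPoly (mkPoly (σ := σ) p m) = m := by
  ext n; simp

lemma fstPoly_mul (f g : (Nagata R σ M)[X]) : fstPoly (f * g) = fstPoly f * fstPoly g :=
  Polynomial.map_mul _

lemma sndPoly_mul (f g : (Nagata R σ M)[X]) :
    sndPoly (f * g) = (fstPoly f).map σ • sndPoly g + fstPoly g • sndPoly f := by
  ext n
  simp only [coeff_sndPoly, coeff_mul, snd_sum, snd_mul, Finset.sum_add_distrib,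
    PolynomialModule.coeff_add, Finsupp.add_apply, PolynomialModule.smul_apply, coeff_map,
    coeff_fstPoly]
  rw [← Finset.Nat.sum_antidiagonal_swap (f := fun x => (g.coeff x.1).1 • (f.coeff x.2).2)]
  rfl

lemma eq_zero_iff_fstPoly_sndPoly (f : (Nagata R σ M)[X]) :
    f = 0 ↔ fstPoly f = 0 ∧ sndPoly f = 0 := by
  refine ⟨by rintro rfl; constructor <;> ext <;> simp, fun ⟨h₁, h₂⟩ => ?_⟩
  ext n : 1
  refine Prod.ext ?_ ?_
  · simpa using congr(($h₁).coeff n)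
  · simpa using congr(($h₂).coeff n)

end Nagata

end

lemma PolynomialModule.smul_eq_zero_of_coeff_smul_coeff_eq_zero {R M : Type*} [CommRing R]
    [AddCommGroup M] [Module R M] {p : R[X]} {m : PolynomialModule R M}
    (h : ∀ i j, p.coeff i • m.coeff j = 0) : p • m = 0 := by
  ext n
  rw [PolynomialModule.smul_apply]
  exact Finset.sum_eq_zero fun x _ => h x.1 x.2

namespace IsArmendarizModule

variable {R : Type*} [CommRing R] {σ : R →+* R} {M : Type*} [AddCommGroup M] [Module R M]

lemma map_smul_eq_zero_of_mul_map_smul_eq_zero (hM : IsArmendarizModule R M)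
    (hC2 : ∀ (m : M) (a : R), (σ a * a) • m = 0 → σ a • m = 0)
    {p : R[X]} {m : PolynomialModule R M} (h : (p * p.map σ) • m = 0) : p.map σ • m = 0 := by
  have h₁ : ∀ v i, σ (p.coeff i) • (p • m).coeff v = 0 := by
    simpa only [coeff_map] using hM (p • m) (p.map σ) (by rwa [← mul_smul, mul_comm])
  have h₂ : ∀ i, p • σ (p.coeff i) • m = 0 := fun i => by
    rw [smul_comm]
    ext v
    exact h₁ v i
  have h₃ : ∀ i v, σ (p.coeff i) • m.coeff v = 0 := fun i v => by
    refine hC2 _ _ ?_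
    rw [mul_comm, ← smul_smul]
    exact hM _ p (h₂ i) v i
  exact PolynomialModule.smul_eq_zero_of_coeff_smul_coeff_eq_zero (by simpa only [coeff_map])

open Nagata in
theorem isArmendarizRing_nagata (hR : IsArmendarizRing R) (hM : IsArmendarizModule R M)
    (hC2 : ∀ (m : M) (a : R), (σ a * a) • m = 0 → σ a • m = 0) :
    IsArmendarizRing (Nagata R σ M) := by
  intro f g hfg i j
  obtain ⟨hfst, hsnd⟩ := (eq_zero_iff_fstPoly_sndPoly (f * g)).1 hfg
  rw [fstPoly_mul] at hfst
  rw [sndPoly_mul] at hsnd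
  have hσ : (fstPoly f).map σ • sndPoly g = 0 := by
    refine hM.map_smul_eq_zero_of_mul_map_smul_eq_zero hC2 ?_
    have := congr(fstPoly f • $hsnd)
    rwa [smul_add, ← mul_smul, ← mul_smul, hfst, zero_smul, add_zero, smul_zero] at this
  have hg : fstPoly g • sndPoly f = 0 := by rwa [hσ, zero_add] at hsnd
  refine Prod.ext ?_ ?_
  · simpa using hR _ _ hfst i j
  · simpa using congr($(hM _ _ hσ j i) + $(hM _ _ hg i j))

end IsArmendarizModule

open Nagata in
theorem IsArmendarizRing.isArmendarizModule_of_nagata {R : Type*} [CommRing R] {σ : R →+* R}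
    {M : Type*} [AddCommGroup M] [Module R M] (h : IsArmendarizRing (Nagata R σ M)) :
    IsArmendarizModule R M := by
  intro m f hfm i j
  have hFG : mkPoly (σ := σ) 0 m * mkPoly f 0 = 0 := by
    simp [eq_zero_iff_fstPoly_sndPoly, fstPoly_mul, sndPoly_mul, hfm]
  simpa using congr(($(h _ _ hFG i j)).2)

/-- Let `R` be a commutative Armendariz ring, `σ` an endomorphism of `R`, and `M` an
`R`-module satisfying `(C_σ^2)` (`(σ a * a) • m = 0` implies `σ a • m = 0`).  Then `M` is
an Armendariz module if and only if the Nagata extension `R ⊕_σ M` is an Armendariz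
ring. -/
theorem armendariz_module_iff_nagata_armendariz
    (R : Type*) [CommRing R] (σ : R →+* R)
    (M : Type*) [AddCommGroup M] [Module R M]
    (hR : IsArmendarizRing R)
    (hC2 : ∀ (m : M) (a : R), (σ a * a) • m = 0 → σ a • m = 0) :
    IsArmendarizModule R M ↔ IsArmendarizRing (Nagata R σ M) :=
  ⟨fun hM => hM.isArmendarizRing_nagata hR hC2, IsArmendarizRing.isArmendarizModule_of_nagata⟩
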